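/- Let R be a commutative Noetherian local ring and M a nonzero finitely generated R-module. The following are equivalent: (i) every M-regular sequence (of elements of the maximal ideal) is R-regular; (ii) depth_R(I, M) ≤ depth_R(I, R) for every ideal I of R; (iii) depth_R(p, M) ≤ depth_R(p, R) for every prime ideal p of R. -/

import Mathlib

open RingTheory.Sequence IsLocalRing CategoryTheory CategoryTheory.Limits
open scoped TensorProduct

/-- The `I`-depth of the module `M`: the supremum of the lengths of
(weakly) regular sequences on `M` consisting of elements of `I`.
(When `IM ≠ M` this is the common length of maximal `M`-regular sequences in `I`;
when `IM = M`, in particular when `M = 0`, it is `∞`, matching the usual convention.) -/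
noncomputable def rdepth {R : Type*} [CommRing R] (I : Ideal R)
    (M : Type*) [AddCommGroup M] [Module R M] : ℕ∞ :=
  sSup {n : ℕ∞ | ∃ rs : List R, (rs.length : ℕ∞) = n ∧ (∀ r ∈ rs, r ∈ I) ∧
    RingTheory.Sequence.IsWeaklyRegular M rs}

/-!
(i) ⇒ (ii): for a proper ideal `I ⊆ 𝔪`, an `M`-weakly regular sequence in `I` is `M`-regular,
hence `R`-regular; for `I = R` both depths are `∞`.

(iii) ⇒ (i): walk along an `M`-regular sequence `x₁, …, xₙ`. If `x₁, …, xᵢ` is `R`-regular but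
`xᵢ₊₁` is a zero divisor on `R/(x₁, …, xᵢ)`, then `xᵢ₊₁` lies in an associated prime `p` of
this quotient. Now `x₁, …, xᵢ₊₁ ∈ p` is `M`-regular, so `depth(p, M) ≥ i + 1`, whereas
`x₁, …, xᵢ` is a maximal `R`-regular sequence in `p`, so `depth(p, R) = i`.

The last step is the fact that maximal regular sequences in an ideal all have the same length.
It follows from Rees's exchange argument: for `N`-regular sequences `a` in `I` of a fixed
length, whether `I` kills a nonzero element of `N / (a) N` does not depend on `a`.
-/

section AssociatedPrimes

variable {R : Type*} [CommRing R] {N : Type*} [AddCommGroup N] [Module R N]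

theorem exists_mem_associatedPrimes_of_not_isSMulRegular [IsNoetherianRing R] {x : R}
    (hx : ¬ IsSMulRegular N x) : ∃ p ∈ associatedPrimes R N, x ∈ p := by
  have : x ∈ ⋃ p ∈ associatedPrimes R N, (p : Set R) := by
    rw [biUnion_associatedPrimes_eq_compl_regular]; exact hx
  simpa using this

theorem IsAssociatedPrime.le_of_quotient_smul_top {p J : Ideal R}
    (h : IsAssociatedPrime p (N ⧸ (J • ⊤ : Submodule R N))) : J ≤ p := fun r hr ↦
  h.annihilator_le <| Submodule.mem_annihilator.2 fun u _ ↦ by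
    induction u using Submodule.Quotient.induction_on with | _ u
    rw [← Submodule.Quotient.mk_smul, Submodule.Quotient.mk_eq_zero]
    exact Submodule.smul_mem_smul hr trivial

end AssociatedPrimes

namespace Ideal

variable {R : Type*} [CommRing R] {I J : Ideal R} {N N' : Type*} [AddCommGroup N] [Module R N]
  [AddCommGroup N'] [Module R N']

variable (I N) in
def AnnihilatesNonzero : Prop := ∃ u : N, u ≠ 0 ∧ ∀ a ∈ I, a • u = 0

theorem AnnihilatesNonzero.mono (h : J.AnnihilatesNonzero N) (hIJ : I ≤ J) :
    I.AnnihilatesNonzero N :=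
  have ⟨u, hu, hJu⟩ := h
  ⟨u, hu, fun a ha ↦ hJu a (hIJ ha)⟩

theorem AnnihilatesNonzero.not_isSMulRegular (h : I.AnnihilatesNonzero N) {r : R} (hr : r ∈ I) :
    ¬ IsSMulRegular N r := fun hreg ↦
  have ⟨_, hu, hIu⟩ := h
  hu (hreg.right_eq_zero_of_smul (hIu r hr))

theorem _root_.IsAssociatedPrime.annihilatesNonzero [IsNoetherianRing R]
    (h : IsAssociatedPrime I N) : I.AnnihilatesNonzero N := by
  obtain ⟨hprime, u, rfl⟩ := isAssociatedPrime_iff.1 h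
  exact ⟨u, fun hu ↦ hprime.ne_top (by simp [hu]), fun a ha ↦ by simpa using ha⟩

theorem _root_.LinearEquiv.annihilatesNonzero_iff (e : N ≃ₗ[R] N') :
    I.AnnihilatesNonzero N ↔ I.AnnihilatesNonzero N' := by
  simp only [AnnihilatesNonzero, e.surjective.exists, ← map_smul, ne_eq,
    LinearEquiv.map_eq_zero_iff]

theorem annihilatesNonzero_prod_iff :
    I.AnnihilatesNonzero (N × N') ↔ I.AnnihilatesNonzero N ∨ I.AnnihilatesNonzero N' := by
  constructor
  · rintro ⟨⟨u, v⟩, huv, hI⟩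
    by_cases hu : u = 0
    · exact .inr ⟨v, fun hv ↦ huv (by simp [hu, hv]), fun a ha ↦ congrArg Prod.snd (hI a ha)⟩
    · exact .inl ⟨u, hu, fun a ha ↦ congrArg Prod.fst (hI a ha)⟩
  · rintro (⟨u, hu, hI⟩ | ⟨v, hv, hI⟩)
    · exact ⟨(u, 0), by simpa using hu, fun a ha ↦ by simp [hI a ha]⟩
    · exact ⟨(0, v), by simpa using hv, fun a ha ↦ by simp [hI a ha]⟩

theorem annihilatesNonzero_iff_forall_not_isSMulRegular [IsNoetherianRing R] [Module.Finite R N] :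
    I.AnnihilatesNonzero N ↔ ∀ r ∈ I, ¬ IsSMulRegular N r := by
  refine ⟨fun h _ ↦ h.not_isSMulRegular, fun h ↦ ?_⟩
  obtain ⟨p, hp, hIp⟩ : ∃ p ∈ associatedPrimes R N, I ≤ p :=
    (I.subset_union_prime_finite (associatedPrimes.finite R N) (f := id) ⊥ ⊥
      fun _ h _ _ ↦ h.1).1 <| by
        simp only [id, biUnion_associatedPrimes_eq_compl_regular]; exact h
  exact hp.annihilatesNonzero.mono hIp

theorem annihilatesNonzero_quotient_iff (K : Submodule R N) :
    I.AnnihilatesNonzero (N ⧸ K) ↔ ∃ u ∉ K, ∀ a ∈ I, a • u ∈ K := by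
  simp only [AnnihilatesNonzero, (Submodule.Quotient.mk_surjective K).exists, ne_eq,
    Submodule.Quotient.mk_eq_zero, ← Submodule.Quotient.mk_smul]

theorem annihilatesNonzero_quotSMulTop_iff {x y : R} (hx : IsSMulRegular N x)
    (hy : IsSMulRegular N y) (hxI : x ∈ I) (hyI : y ∈ I) :
    I.AnnihilatesNonzero (QuotSMulTop x N) ↔ I.AnnihilatesNonzero (QuotSMulTop y N) := by
  suffices key : ∀ x y : R, IsSMulRegular N x → IsSMulRegular N y → y ∈ I →
      I.AnnihilatesNonzero (QuotSMulTop x N) → I.AnnihilatesNonzero (QuotSMulTop y N) from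
    ⟨key x y hx hy hyI, key y x hy hx hxI⟩
  intro x y hx hy hyI
  simp only [QuotSMulTop, annihilatesNonzero_quotient_iff, Submodule.mem_smul_pointwise_iff_exists,
    Submodule.mem_top, true_and]
  rintro ⟨u, hu, hIu⟩
  -- writing `y • u = x • v`, the element `v` plays for `y` the role `u` plays for `x`
  obtain ⟨v, hv⟩ := hIu y hyI
  refine ⟨v, fun ⟨t, ht⟩ ↦ hu ⟨t, hy ?_⟩, fun a ha ↦ ?_⟩
  · simp only [← hv, ← ht, smul_comm x y t]
  · obtain ⟨w, hw⟩ := hIu a ha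
    refine ⟨w, hx ?_⟩
    simp only [smul_comm x a, hv, smul_comm a y, ← hw, smul_comm x y]

theorem annihilatesNonzero_quotient_ofList_append_singleton_iff {as : List R} {a z : R}
    (ha : IsSMulRegular (N ⧸ (ofList as • ⊤ : Submodule R N)) a)
    (hz : IsSMulRegular (N ⧸ (ofList as • ⊤ : Submodule R N)) z) (haI : a ∈ I) (hzI : z ∈ I) :
    I.AnnihilatesNonzero (N ⧸ (ofList (as ++ [a]) • ⊤ : Submodule R N)) ↔
      I.AnnihilatesNonzero (QuotSMulTop z N ⧸ (ofList as • ⊤ : Submodule R (QuotSMulTop z N))) := by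
  have hcomm : ofList (as ++ [a]) = ofList (a :: as) := by simp [sup_comm]
  calc _ ↔ I.AnnihilatesNonzero (N ⧸ (ofList (a :: as) • ⊤ : Submodule R N)) :=
        (Submodule.quotEquivOfEq _ _ (by rw [hcomm])).annihilatesNonzero_iff
    _ ↔ I.AnnihilatesNonzero (QuotSMulTop a (N ⧸ (ofList as • ⊤ : Submodule R N))) :=
        (Submodule.quotOfListConsSMulTopEquivQuotSMulTopOuter N a as).annihilatesNonzero_iff
    _ ↔ I.AnnihilatesNonzero (QuotSMulTop z (N ⧸ (ofList as • ⊤ : Submodule R N))) :=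
        annihilatesNonzero_quotSMulTop_iff ha hz haI hzI
    _ ↔ I.AnnihilatesNonzero (N ⧸ (ofList (z :: as) • ⊤ : Submodule R N)) :=
        (Submodule.quotOfListConsSMulTopEquivQuotSMulTopOuter N z as).annihilatesNonzero_iff.symm
    _ ↔ _ := (Submodule.quotOfListConsSMulTopEquivQuotSMulTopInner N z as).annihilatesNonzero_iff

end Ideal

namespace RingTheory.Sequence

variable {R : Type*} [CommRing R] {N : Type*} [AddCommGroup N] [Module R N]

theorem isWeaklyRegular_of_forall_isUnit {rs : List R} (h : ∀ r ∈ rs, IsUnit r) :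
    IsWeaklyRegular N rs := by
  induction rs generalizing N with
  | nil => exact .nil R N
  | cons r rs ih =>
    simp only [List.mem_cons, forall_eq_or_imp] at h
    exact (isWeaklyRegular_cons_iff N r rs).2 ⟨h.1.isSMulRegular N, ih h.2⟩

theorem IsWeaklyRegular.quotSMulTop [IsLocalRing R] [IsNoetherian R N] {as : List R} {z : R}
    (h : IsWeaklyRegular N as) (hz : IsSMulRegular (N ⧸ (Ideal.ofList as • ⊤ : Submodule R N)) z)
    (hm : ∀ r ∈ as, r ∈ maximalIdeal R) (hzm : z ∈ maximalIdeal R) :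
    IsWeaklyRegular (QuotSMulTop z N) as := by
  have hcat : IsWeaklyRegular N (as ++ [z]) :=
    (isWeaklyRegular_append_iff N as [z]).2 ⟨h, (isWeaklyRegular_singleton_iff _ z).2 hz⟩
  refine ((isWeaklyRegular_cons_iff N z as).1 <| isWeaklyRegular_of_perm_of_subset_maximalIdeal
    hcat (List.perm_append_singleton z as) fun r hr ↦
      (List.mem_append.1 hr).elim (hm r) fun hr ↦ List.mem_singleton.1 hr ▸ hzm).2

end RingTheory.Sequence

section Depth

open Ideal

variable {R : Type*} [CommRing R] {I : Ideal R} {N : Type*} [AddCommGroup N] [Module R N]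

theorem Ideal.annihilatesNonzero_quotient_ofList_iff [IsLocalRing R] [IsNoetherianRing R]
    [Module.Finite R N] (hI : I ≤ maximalIdeal R) {as bs : List R}
    (hlen : as.length = bs.length) (has : IsWeaklyRegular N as) (hbs : IsWeaklyRegular N bs)
    (hasI : ∀ r ∈ as, r ∈ I) (hbsI : ∀ r ∈ bs, r ∈ I) :
    I.AnnihilatesNonzero (N ⧸ (ofList as • ⊤ : Submodule R N)) ↔
      I.AnnihilatesNonzero (N ⧸ (ofList bs • ⊤ : Submodule R N)) := by
  induction as using List.reverseRecOn generalizing N bs with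
  | nil => rw [List.eq_nil_of_length_eq_zero hlen.symm]
  | append_singleton as a ih =>
    obtain rfl | ⟨bs, b, rfl⟩ := bs.eq_nil_or_concat'
    · simp at hlen
    simp only [List.length_append, List.length_singleton, Nat.add_right_cancel_iff] at hlen
    simp only [List.mem_append, List.mem_singleton] at hasI hbsI
    obtain ⟨has, ha⟩ := (isWeaklyRegular_append_iff N as [a]).1 has
    obtain ⟨hbs, hb⟩ := (isWeaklyRegular_append_iff N bs [b]).1 hbs
    rw [isWeaklyRegular_singleton_iff] at ha hb
    -- prime avoidance: `I` contains an element regular on both `N / (as) N` and `N / (bs) N`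
    obtain ⟨z, hzI, hz⟩ : ∃ z ∈ I, IsSMulRegular ((N ⧸ (ofList as • ⊤ : Submodule R N)) ×
        (N ⧸ (ofList bs • ⊤ : Submodule R N))) z := by
      by_contra! h
      rcases annihilatesNonzero_prod_iff.1 (annihilatesNonzero_iff_forall_not_isSMulRegular.2 h)
        with h | h
      · exact h.not_isSMulRegular (hasI a (.inr rfl)) ha
      · exact h.not_isSMulRegular (hbsI b (.inr rfl)) hb
    obtain ⟨hza, hzb⟩ := Prod.isSMulRegular_iff.1 hz
    rw [annihilatesNonzero_quotient_ofList_append_singleton_iff ha hza (hasI a (.inr rfl)) hzI,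
      annihilatesNonzero_quotient_ofList_append_singleton_iff hb hzb (hbsI b (.inr rfl)) hzI]
    exact ih hlen (has.quotSMulTop hza (fun r hr ↦ hI (hasI r (.inl hr))) (hI hzI))
      (hbs.quotSMulTop hzb (fun r hr ↦ hI (hbsI r (.inl hr))) (hI hzI))
      (fun r hr ↦ hasI r (.inl hr)) (fun r hr ↦ hbsI r (.inl hr))

theorem RingTheory.Sequence.IsWeaklyRegular.length_le_of_annihilatesNonzero [IsLocalRing R]
    [IsNoetherianRing R] [Module.Finite R N] (hI : I ≤ maximalIdeal R) {as bs : List R}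
    (has : IsWeaklyRegular N as) (hasI : ∀ r ∈ as, r ∈ I) (hbs : IsWeaklyRegular N bs)
    (hbsI : ∀ r ∈ bs, r ∈ I) (hann : I.AnnihilatesNonzero (N ⧸ (ofList bs • ⊤ : Submodule R N))) :
    as.length ≤ bs.length := by
  by_contra! hlt
  have htake : IsWeaklyRegular N (as.take bs.length) :=
    ((isWeaklyRegular_append_iff N _ _).1 ((as.take_append_drop bs.length).symm ▸ has)).1
  rw [← annihilatesNonzero_quotient_ofList_iff hI (by simp [hlt.le]) htake hbs
    (fun r hr ↦ hasI r (List.mem_of_mem_take hr)) hbsI] at hann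
  exact hann.not_isSMulRegular (hasI _ (as.getElem_mem hlt)) (has.regular_mod_prev _ hlt)

theorem length_le_rdepth {rs : List R} (hrsI : ∀ r ∈ rs, r ∈ I) (hrs : IsWeaklyRegular N rs) :
    (rs.length : ℕ∞) ≤ rdepth I N :=
  le_sSup ⟨rs, rfl, hrsI, hrs⟩

theorem rdepth_le_length_of_annihilatesNonzero [IsLocalRing R] [IsNoetherianRing R]
    [Module.Finite R N] (hI : I ≤ maximalIdeal R) {bs : List R} (hbs : IsWeaklyRegular N bs)
    (hbsI : ∀ r ∈ bs, r ∈ I) (hann : I.AnnihilatesNonzero (N ⧸ (ofList bs • ⊤ : Submodule R N))) :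
    rdepth I N ≤ bs.length := by
  refine sSup_le ?_
  rintro _ ⟨as, rfl, hasI, has⟩
  exact_mod_cast has.length_le_of_annihilatesNonzero hI hasI hbs hbsI hann

theorem rdepth_top : rdepth (⊤ : Ideal R) N = ⊤ := by
  refine sSup_eq_top.2 fun n hn ↦ ?_
  lift n to ℕ using hn.ne
  refine ⟨(n + 1 : ℕ), ⟨List.replicate (n + 1) 1, by simp, by simp,
    isWeaklyRegular_of_forall_isUnit (by simp)⟩, by exact_mod_cast n.lt_succ_self⟩

theorem isWeaklyRegular_of_forall_rdepth_le [IsLocalRing R] [IsNoetherianRing R]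
    (h : ∀ p : Ideal R, p.IsPrime → rdepth p N ≤ rdepth p R) {rs : List R}
    (hrs : IsWeaklyRegular N rs) (hm : ∀ r ∈ rs, r ∈ maximalIdeal R) : IsWeaklyRegular R rs := by
  induction rs using List.reverseRecOn with
  | nil => exact .nil R R
  | append_singleton rs x ih =>
    simp only [List.mem_append, List.mem_singleton] at hm
    have hR : IsWeaklyRegular R rs :=
      ih ((isWeaklyRegular_append_iff N rs [x]).1 hrs).1 fun r hr ↦ hm r (.inl hr)
    refine (isWeaklyRegular_append_iff R rs [x]).2 ⟨hR, (isWeaklyRegular_singleton_iff _ x).2 ?_⟩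
    by_contra hx
    obtain ⟨p, hp, hxp⟩ := exists_mem_associatedPrimes_of_not_isSMulRegular hx
    have hrsp : ∀ r ∈ rs, r ∈ p := fun r hr ↦ hp.le_of_quotient_smul_top (subset_span hr)
    have hdepthM : ((rs ++ [x]).length : ℕ∞) ≤ rdepth p N :=
      length_le_rdepth (by simpa [or_imp, forall_and, hxp] using hrsp) hrs
    have hdepthR : rdepth p R ≤ rs.length := rdepth_le_length_of_annihilatesNonzero
      (le_maximalIdeal hp.isPrime.ne_top) hR hrsp hp.annihilatesNonzero
    have : (rs ++ [x]).length ≤ rs.length := by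
      exact_mod_cast (hdepthM.trans (h p hp.isPrime)).trans hdepthR
    simp at this

end Depth

/-- Equivalence of: (i) every `M`-regular sequence of elements of the maximal ideal is
`R`-regular; (ii) `depth_R(I, M) ≤ depth_R(I, R)` for all ideals `I`;
(iii) `depth_R(p, M) ≤ depth_R(p, R)` for all primes `p`. -/
theorem stmt2 {R : Type*} [CommRing R] [IsNoetherianRing R] [IsLocalRing R]
    (M : Type*) [AddCommGroup M] [Module R M] [Module.Finite R M] [Nontrivial M] :
    List.TFAE
      [∀ rs : List R, (∀ x ∈ rs, x ∈ maximalIdeal R) →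
          RingTheory.Sequence.IsRegular M rs → RingTheory.Sequence.IsRegular R rs,
       ∀ I : Ideal R, rdepth I M ≤ rdepth I R,
       ∀ p : Ideal R, p.IsPrime → rdepth p M ≤ rdepth p R] := by
  tfae_have 1 → 2 := by
    intro h I
    rcases eq_or_ne I ⊤ with rfl | hI
    · simp [rdepth_top]
    refine sSup_le ?_
    rintro _ ⟨rs, rfl, hrsI, hrs⟩
    have hm : ∀ r ∈ rs, r ∈ maximalIdeal R := fun r hr ↦ le_maximalIdeal hI (hrsI r hr)
    exact length_le_rdepth hrsI
      (h rs hm ((isRegular_iff_isWeaklyRegular_of_subset_maximalIdeal hm).2 hrs)).toIsWeaklyRegular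
  tfae_have 2 → 3 := fun h p _ ↦ h p
  tfae_have 3 → 1 := fun h rs hm hrs ↦ .of_isWeaklyRegular_of_mem_maximalIdeal R hm
    (isWeaklyRegular_of_forall_rdepth_le h hrs.toIsWeaklyRegular hm)
  tfae_finish
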